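/- arXiv:2211.17040 — 2 statements merged into one kernel-verified Lean document; each statement's English description precedes it below -/
import Mathlib

section
/- Let n ≥ 2 and let κ₁ ≤ κ₂ ≤ ... ≤ κₙ be real numbers with H = κ₁ + ... + κₙ > 0. If H − n κ₁ ≤ n H ω for some ω ≥ 0, then the squared norm of the traceless part satisfies |Å|² := Σᵢ κᵢ² − H²/n ≤ C(n) H² ω², where C(n) is a constant depending only on n (one may take C(n) = n(n−1)²). -/
/-!
Shifting every curvature by `κ₁` leaves `Σ κᵢ² − H²/n` unchanged and turns the curvatures into
nonnegative numbers `κᵢ − κ₁` with sum `H − nκ₁`. For nonnegative numbers the sum of squares is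
at most the square of the sum, so `|Å|² ≤ (1 − 1/n)(H − nκ₁)² ≤ (1 − 1/n)(nHω)² = n(n−1)H²ω²`.
-/

open Finset

variable {ι : Type*}

theorem Finset.sum_sq_sub_sq_sum_div_card_sub_const (s : Finset ι) (f : ι → ℝ) (c : ℝ) :
    ∑ i ∈ s, (f i - c) ^ 2 - (∑ i ∈ s, (f i - c)) ^ 2 / #s =
      ∑ i ∈ s, f i ^ 2 - (∑ i ∈ s, f i) ^ 2 / #s := by
  rcases s.eq_empty_or_nonempty with rfl | hs
  · simp
  have hcard : (#s : ℝ) ≠ 0 := by exact_mod_cast hs.card_ne_zero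
  simp only [sub_sq, sum_add_distrib, sum_sub_distrib, sum_const, nsmul_eq_mul, ← sum_mul,
    ← mul_sum]
  field_simp
  ring

theorem Finset.sum_sq_sub_sq_sum_div_card_le_of_le (s : Finset ι) (f : ι → ℝ) {m : ℝ}
    (hm : ∀ i ∈ s, m ≤ f i) :
    ∑ i ∈ s, f i ^ 2 - (∑ i ∈ s, f i) ^ 2 / #s ≤
      (1 - 1 / #s) * (∑ i ∈ s, f i - #s * m) ^ 2 := by
  have hshift : ∑ i ∈ s, (f i - m) = ∑ i ∈ s, f i - #s * m := by
    rw [sum_sub_distrib, sum_const, nsmul_eq_mul]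
  have hsq : ∑ i ∈ s, (f i - m) ^ 2 ≤ (∑ i ∈ s, (f i - m)) ^ 2 :=
    sum_sq_le_sq_sum_of_nonneg fun i hi => sub_nonneg.2 (hm i hi)
  rw [← s.sum_sq_sub_sq_sum_div_card_sub_const f m, ← hshift, sub_mul, one_mul,
    one_div_mul_eq_div]
  linarith

/-- If `H − nκ₁ ≤ nHω` for ordered principal curvatures with `H > 0`, then the
traceless second fundamental form satisfies `|Å|² ≤ n(n−1)² H² ω²`. -/
theorem traceless_bound (n : ℕ) (hn : 2 ≤ n) (κ : Fin n → ℝ)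
    (hmono : Monotone κ) (ω : ℝ)
    (hpinch : (∑ i, κ i) - n * κ ⟨0, by omega⟩ ≤ n * (∑ i, κ i) * ω) :
    (∑ i, (κ i) ^ 2) - (∑ i, κ i) ^ 2 / n ≤
      n * ((n : ℝ) - 1) ^ 2 * (∑ i, κ i) ^ 2 * ω ^ 2 := by
  set H := ∑ i, κ i
  have hn' : (2 : ℝ) ≤ n := by exact_mod_cast hn
  have hmin : ∀ i ∈ univ, κ ⟨0, by omega⟩ ≤ κ i := fun i _ => hmono (Nat.zero_le i.val)
  have hvar := univ.sum_sq_sub_sq_sum_div_card_le_of_le κ hmin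
  simp only [card_univ, Fintype.card_fin] at hvar
  have hgap : (H - n * κ ⟨0, by omega⟩) ^ 2 ≤ (n * H * ω) ^ 2 := by
    have hsum : n * κ ⟨0, by omega⟩ ≤ H := by
      simpa using card_nsmul_le_sum univ κ _ hmin
    exact pow_le_pow_left₀ (sub_nonneg.2 hsum) hpinch 2
  have hfactor : 0 ≤ 1 - 1 / (n : ℝ) := by rw [sub_nonneg, div_le_one₀] <;> linarith
  calc (∑ i, κ i ^ 2) - H ^ 2 / n
      ≤ (1 - 1 / n) * (n * H * ω) ^ 2 := hvar.trans (by gcongr)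
    _ = n * (n - 1) * H ^ 2 * ω ^ 2 := by field_simp
    _ ≤ n * (n - 1) ^ 2 * H ^ 2 * ω ^ 2 := by gcongr; nlinarith
end

section
/- Let f : Γ₊ → (0, ∞) be a symmetric function on the positive cone that is positively homogeneous of degree 1 and convex, strictly increasing in each argument, with f(1,...,1) = n. Then the dual function f̃(κ₁,...,κₙ) = 1/f(κ₁^{-1}, ..., κₙ^{-1}) is concave on Γ₊, i.e., f is inverse concave. -/
/-!
Pointwise, `(a x + b y)⁻¹ ≤ (s²/a) x⁻¹ + (t²/b) y⁻¹` whenever `s + t = 1` (Cauchy–Schwarz).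
Monotonicity, convexity and homogeneity of `f` turn this into
`f((a x + b y)⁻¹) ≤ (s²/a) f(x⁻¹) + (t²/b) f(y⁻¹)`, and the optimal weights
`s : t = a / f(x⁻¹) : b / f(y⁻¹)` make the right side `(a / f(x⁻¹) + b / f(y⁻¹))⁻¹`,
which is the concavity of `κ ↦ f(κ⁻¹)⁻¹`.
-/

theorem ConvexOn.map_smul_add_smul_le_of_homogeneous {E : Type*} [AddCommGroup E] [Module ℝ E]
    {s : Set E} {f : E → ℝ} (hf : ConvexOn ℝ s f)
    (hhom : ∀ c : ℝ, 0 < c → ∀ x ∈ s, f (c • x) = c * f x)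
    {x y : E} (hx : x ∈ s) (hy : y ∈ s) {a b : ℝ} (ha : 0 < a) (hb : 0 < b) :
    f (a • x + b • y) ≤ a * f x + b * f y := by
  have hab : 0 < a + b := add_pos ha hb
  have hsplit : a • x + b • y = (a + b) • ((a / (a + b)) • x + (b / (a + b)) • y) := by
    rw [smul_add, smul_smul, smul_smul, mul_div_cancel₀ _ hab.ne', mul_div_cancel₀ _ hab.ne']
  have hwts : a / (a + b) + b / (a + b) = 1 := by field_simp
  rw [hsplit, hhom _ hab _ (hf.1 hx hy (by positivity) (by positivity) hwts)]
  calc (a + b) * f ((a / (a + b)) • x + (b / (a + b)) • y)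
      ≤ (a + b) * ((a / (a + b)) * f x + (b / (a + b)) * f y) :=
        mul_le_mul_of_nonneg_left (hf.2 hx hy (by positivity) (by positivity) hwts) hab.le
    _ = a * f x + b * f y := by field_simp

theorem inv_add_le_sq_div_add_sq_div {p q : ℝ} (hp : 0 < p) (hq : 0 < q) {s t : ℝ}
    (hst : s + t = 1) : (p + q)⁻¹ ≤ s ^ 2 / p + t ^ 2 / q := by
  obtain rfl : t = 1 - s := by linarith
  rw [inv_eq_one_div, div_add_div _ _ hp.ne' hq.ne', 
    div_le_div_iff₀ (by positivity) (by positivity)]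
  nlinarith [sq_nonneg (s * q - (1 - s) * p)]

theorem Pi.inv_smul_add_smul_le {ι : Type*} {x y : ι → ℝ} (hx : ∀ i, 0 < x i) (hy : ∀ i, 0 < y i)
    {a b : ℝ} (ha : 0 < a) (hb : 0 < b) {s t : ℝ} (hst : s + t = 1) :
    (a • x + b • y)⁻¹ ≤ (s ^ 2 / a) • x⁻¹ + (t ^ 2 / b) • y⁻¹ := fun i => by
  have := inv_add_le_sq_div_add_sq_div (mul_pos ha (hx i)) (mul_pos hb (hy i)) hst
  simp only [Pi.add_apply, Pi.smul_apply, Pi.inv_apply, smul_eq_mul]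
  convert this using 2 <;> field_simp

theorem convex_implies_inverse_concave_general (n : ℕ)
    (f : (Fin n → ℝ) → ℝ)
    (Γpos : Set (Fin n → ℝ)) (hΓ : Γpos = {κ : Fin n → ℝ | ∀ i, 0 < κ i})
    (hpos : ∀ κ ∈ Γpos, 0 < f κ)
    (hhom : ∀ (c : ℝ), 0 < c → ∀ κ ∈ Γpos, f (c • κ) = c * f κ)
    (hconv : ConvexOn ℝ Γpos f)
    (hmono : ∀ κ μ, κ ∈ Γpos → μ ∈ Γpos → (∀ i, κ i ≤ μ i) → κ ≠ μ → f κ < f μ) :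
    ConcaveOn ℝ Γpos (fun κ => (f (fun i => (κ i)⁻¹))⁻¹) := by
  subst hΓ
  have hmono' : MonotoneOn f {κ : Fin n → ℝ | ∀ i, 0 < κ i} := fun κ hκ μ hμ hle =>
    (eq_or_ne κ μ).elim (fun h => h ▸ le_rfl) (hmono κ μ hκ hμ hle · |>.le)
  refine concaveOn_iff_forall_pos.2 ⟨hconv.1, fun x hx y hy a b ha hb hab => ?_⟩
  have hxy' : ∀ i, 0 < (a • x + b • y)⁻¹ i := fun i =>
    inv_pos.2 (hconv.1 hx hy ha.le hb.le hab i)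
  have hx' : ∀ i, 0 < x⁻¹ i := fun i => inv_pos.2 (hx i)
  have hy' : ∀ i, 0 < y⁻¹ i := fun i => inv_pos.2 (hy i)
  set A := f x⁻¹
  set B := f y⁻¹
  have hA : 0 < A := hpos _ hx'
  have hB : 0 < B := hpos _ hy'
  set H := a / A + b / B
  have hH : 0 < H := by positivity
  set s := a / A / H
  set t := b / B / H
  have hst : s + t = 1 := by rw [← add_div, div_self hH.ne']
  have hs : 0 < s ^ 2 / a := by positivity
  have ht : 0 < t ^ 2 / b := by positivity
  have key : f (a • x + b • y)⁻¹ ≤ H⁻¹ := calc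
    f (a • x + b • y)⁻¹ ≤ f ((s ^ 2 / a) • x⁻¹ + (t ^ 2 / b) • y⁻¹) :=
      hmono' hxy' (fun i => add_pos (mul_pos hs (hx' i)) (mul_pos ht (hy' i)))
        (Pi.inv_smul_add_smul_le hx hy ha hb hst)
    _ ≤ s ^ 2 / a * A + t ^ 2 / b * B :=
      hconv.map_smul_add_smul_le_of_homogeneous hhom hx' hy' hs ht
    _ = H⁻¹ := by simp only [s, t, H]; field_simp
  show a * A⁻¹ + b * B⁻¹ ≤ (f (a • x + b • y)⁻¹)⁻¹
  rw [← div_eq_mul_inv, ← div_eq_mul_inv]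
  exact (le_inv_comm₀ hH (hpos _ hxy')).2 key

/-- A convex, 1-homogeneous, strictly monotone, normalized symmetric curvature
function on the positive cone is inverse concave: the dual function
`f̃(κ) = 1/f(κ⁻¹)` is concave on the positive cone. -/
theorem convex_implies_inverse_concave (n : ℕ) (hn : 2 ≤ n)
    (f : (Fin n → ℝ) → ℝ)
    (Γpos : Set (Fin n → ℝ)) (hΓ : Γpos = {κ : Fin n → ℝ | ∀ i, 0 < κ i})
    (hsymm : ∀ (σ : Equiv.Perm (Fin n)) (κ : Fin n → ℝ), κ ∈ Γpos → f (κ ∘ σ) = f κ)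
    (hpos : ∀ κ ∈ Γpos, 0 < f κ)
    (hhom : ∀ (c : ℝ), 0 < c → ∀ κ ∈ Γpos, f (c • κ) = c * f κ)
    (hconv : ConvexOn ℝ Γpos f)
    (hmono : ∀ κ μ, κ ∈ Γpos → μ ∈ Γpos → (∀ i, κ i ≤ μ i) → κ ≠ μ → f κ < f μ)
    (hnorm : f (fun _ => 1) = n) :
    ConcaveOn ℝ Γpos (fun κ => (f (fun i => (κ i)⁻¹))⁻¹) :=
  convex_implies_inverse_concave_general n f Γpos hΓ hpos hhom hconv hmono
end
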